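/- arXiv:2605.16511 — 2 statements merged into one kernel-verified Lean document; each statement's English description precedes it below -/
import Mathlib

section
/- For every finite connected graph H with at least one edge, the mixing time of the lazy random walk on H is at most 8·diam(H)·|E(H)|, where diam(H) is the diameter of H and |E(H)| is its number of edges. -/
open scoped Classical
open Filter

namespace RandomGraphPaper

/-- A degree sequence: a nondecreasing tuple of naturals. -/
structure DegSeq where
  n : ℕ
  d : Fin n → ℕ
  mono : Monotone d

noncomputable section

/-- Degree of a vertex. -/
def deg {V : Type} [Fintype V] (G : SimpleGraph V) (v : V) : ℕ :=
  (Finset.univ.filter fun w => G.Adj v w).card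

/-- Edge set as a finset. -/
def edges {V : Type} [Fintype V] (G : SimpleGraph V) : Finset (Sym2 V) :=
  Finset.univ.filter fun e => e ∈ G.edgeSet

/-- The set of simple graphs on `Fin D.n` realizing the degree sequence `D`. -/
def graphs (D : DegSeq) : Finset (SimpleGraph (Fin D.n)) :=
  Finset.univ.filter fun G => ∀ i, deg G i = D.d i

/-- A degree sequence is feasible if some simple graph realizes it. -/
def Feasible (D : DegSeq) : Prop := (graphs D).Nonempty

/-- Probability that a uniformly random simple graph with degree sequence `D`
satisfies the property `P`. -/
def prob (D : DegSeq) (P : SimpleGraph (Fin D.n) → Prop) : ℝ :=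
  ((graphs D).filter P).card / (graphs D).card

/-- `m(D)`: the number of edges. -/
def mD (D : DegSeq) : ℕ := (∑ i, D.d i) / 2

/-- `n_k(D)`: the number of entries equal to `k`. -/
def nk (D : DegSeq) (k : ℕ) : ℕ := (Finset.univ.filter fun i => D.d i = k).card

/-- `m^{≠2}(D) = m(D) - n₂(D)`. -/
def mne2 (D : DegSeq) : ℕ := mD D - nk D 2

/-- Maximum degree `Δ(D)`. -/
def maxDeg (D : DegSeq) : ℕ := Finset.univ.sup D.d

/-- A property of the random graphs holds with high probability along the sequence `Ds`. -/
def WHP (Ds : ℕ → DegSeq) (P : ∀ ℓ, SimpleGraph (Fin (Ds ℓ).n) → Prop) : Prop :=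
  Tendsto (fun ℓ => prob (Ds ℓ) (P ℓ)) atTop (nhds 1)

/-- Order (number of vertices) of a connected component. -/
def compOrder {n : ℕ} (G : SimpleGraph (Fin n)) (c : G.ConnectedComponent) : ℕ :=
  (Finset.univ.filter fun v => G.connectedComponentMk v = c).card

/-- Number of edges of a connected component. -/
def compEdges {n : ℕ} (G : SimpleGraph (Fin n)) (c : G.ConnectedComponent) : ℕ :=
  ((edges G).filter fun e => ∀ v ∈ e, G.connectedComponentMk v = c).card

/-- Diameter of a connected component. -/
def compDiam {n : ℕ} (G : SimpleGraph (Fin n)) (c : G.ConnectedComponent) : ℕ :=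
  Finset.univ.sup fun p : Fin n × Fin n =>
    if G.connectedComponentMk p.1 = c ∧ G.connectedComponentMk p.2 = c then G.dist p.1 p.2 else 0

/-- The sequence of degree sequences has a giant component. -/
def HasGiant (Ds : ℕ → DegSeq) : Prop :=
  ∃ ε : ℝ, 0 < ε ∧
    WHP Ds fun ℓ G => ∃ c : G.ConnectedComponent, ε * ((Ds ℓ).n : ℝ) ≤ (compOrder G c : ℝ)

/-- The sequence of degree sequences has a gigantic component. -/
def HasGigantic (Ds : ℕ → DegSeq) : Prop :=
  ∃ ε : ℝ, 0 < ε ∧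
    WHP Ds fun ℓ G => ∃ c : G.ConnectedComponent, ε * (mD (Ds ℓ) : ℝ) ≤ (compEdges G c : ℝ)

/-- Transition matrix of the lazy random walk on `H`. -/
def lazyP {V : Type} [Fintype V] (H : SimpleGraph V) : Matrix V V ℝ :=
  Matrix.of fun u v =>
    if u = v then 1 / 2 else if H.Adj u v then 1 / (2 * (deg H u : ℝ)) else 0

/-- Stationary distribution of the lazy random walk on `H`. -/
def statDist {V : Type} [Fintype V] (H : SimpleGraph V) : V → ℝ :=
  fun v => (deg H v : ℝ) / (2 * ((edges H).card : ℝ))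

/-- Total variation distance between two distributions on a finite set. -/
def tvDist {V : Type} [Fintype V] (μ ν : V → ℝ) : ℝ :=
  ⨆ A : Finset V, |∑ v ∈ A, μ v - ∑ v ∈ A, ν v|

/-- Mixing time of the lazy random walk on `H`. -/
def mixingTime {V : Type} [Fintype V] (H : SimpleGraph V) : ℕ :=
  Finset.univ.sup fun i : V =>
    sInf {t : ℕ | tvDist (fun v => (lazyP H ^ t) i v) (statDist H) < (Real.exp 1)⁻¹}

/-- Mixing time of the lazy random walk on a connected component. -/
def compMix {n : ℕ} (G : SimpleGraph (Fin n)) (c : G.ConnectedComponent) : ℕ :=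
  mixingTime (G.induce c.supp)

/-- Sum of the degrees over a set of vertices. -/
def setDeg {V : Type} [Fintype V] (H : SimpleGraph V) (S : Finset V) : ℕ :=
  ∑ v ∈ S, deg H v

/-- Number of edges with exactly one endpoint in `S`. -/
def outS {V : Type} [Fintype V] (H : SimpleGraph V) (S : Finset V) : ℕ :=
  ((edges H).filter fun e => ∃ u v, e = s(u, v) ∧ u ∈ S ∧ v ∉ S).card

/-- Conductance of a set of vertices, as an extended nonnegative real. -/
def condS {V : Type} [Fintype V] (H : SimpleGraph V) (S : Finset V) : ENNReal :=
  ENNReal.ofReal ((outS H S : ℝ) / (setDeg H S : ℝ))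

/-- `cond(x)`: the minimum conductance over connected sets `S` with
`x/2 ≤ d(S) ≤ min x (d(V)/2)`; it is `⊤` if no such set exists. -/
def condAt {V : Type} [Fintype V] (H : SimpleGraph V) (x : ℝ) : ENNReal :=
  ⨅ (S : Finset V) (_ : (H.induce (S : Set V)).Connected ∧
      x / 2 ≤ (setDeg H S : ℝ) ∧
      (setDeg H S : ℝ) ≤ min x ((setDeg H Finset.univ : ℝ) / 2)), condS H S

/-- Diameter of a (connected) graph. -/
def graphDiam {V : Type} [Fintype V] (H : SimpleGraph V) : ℕ :=
  Finset.univ.sup fun p : V × V => H.dist p.1 p.2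

/-- `∑_{i=1}^{j} d_i (d_i - 2)` (1-indexed). -/
def partialQ (D : DegSeq) (j : ℕ) : ℤ :=
  ∑ i : Fin D.n, if (i : ℕ) < j then (D.d i : ℤ) * ((D.d i : ℤ) - 2) else 0

/-- `j_D`: the least `j ∈ {1,…,n}` with `∑_{i=1}^j d_i(d_i-2) > 0`, or `n` if none exists. -/
def jD (D : DegSeq) : ℕ :=
  if ∃ j, 1 ≤ j ∧ j ≤ D.n ∧ 0 < partialQ D j
  then sInf {j | 1 ≤ j ∧ j ≤ D.n ∧ 0 < partialQ D j}
  else D.n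

/-- `R_D = ∑_{i=j_D}^n d_i` (1-indexed). -/
def RD (D : DegSeq) : ℕ :=
  ∑ i ∈ Finset.univ.filter (fun i : Fin D.n => jD D - 1 ≤ (i : ℕ)), D.d i

/-- `∑_{i=n-d_n+1}^n d_i` (1-indexed): the sum of the top `d_n` degrees. -/
def topSum (D : DegSeq) : ℕ :=
  ∑ i ∈ Finset.univ.filter (fun i : Fin D.n => D.n - maxDeg D ≤ (i : ℕ)), D.d i

/-- `D` has a `μ`-center. -/
def HasCenter (μ : ℝ) (D : DegSeq) : Prop :=
  μ ^ 2 * (mne2 D : ℝ) ≤ (topSum D : ℝ) ∧ μ ^ 3 * (mD D : ℝ) ≤ (mne2 D : ℝ)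

/-- `cyc(G)`: the number of vertices lying in cycle components of `G`
(a component is a cycle iff all its vertices have degree two). -/
def cyc {n : ℕ} (G : SimpleGraph (Fin n)) : ℕ :=
  (Finset.univ.filter fun v : Fin n =>
    ∀ w, G.connectedComponentMk w = G.connectedComponentMk v → deg G w = 2).card

/-- A maximal degree-two path: a path of positive length whose endpoints have degree `≠ 2`
and whose internal vertices all have degree `2`. -/
def IsMaxPath {n : ℕ} (G : SimpleGraph (Fin n)) {u v : Fin n} (w : G.Walk u v) : Prop :=
  w.IsPath ∧ 0 < w.length ∧ deg G u ≠ 2 ∧ deg G v ≠ 2 ∧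
    ∀ x ∈ w.support, x ≠ u → x ≠ v → deg G x = 2

/-- The maximal degree-two paths of `G`, identified with their edge sets. -/
def maxPaths {n : ℕ} (G : SimpleGraph (Fin n)) : Finset (Finset (Sym2 (Fin n))) :=
  Finset.univ.filter fun E =>
    ∃ (u v : Fin n) (w : G.Walk u v), IsMaxPath G w ∧ E = w.edges.toFinset

/-- `r(G)`: number of red (length-one) maximal degree-two paths. -/
def rG {n : ℕ} (G : SimpleGraph (Fin n)) : ℕ := ((maxPaths G).filter fun E => E.card = 1).card

/-- `y(G)`: number of yellow (length-two) maximal degree-two paths. -/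
def yG {n : ℕ} (G : SimpleGraph (Fin n)) : ℕ := ((maxPaths G).filter fun E => E.card = 2).card

/-- `g(G)`: number of green (length at least three) maximal degree-two paths. -/
def gG {n : ℕ} (G : SimpleGraph (Fin n)) : ℕ := ((maxPaths G).filter fun E => 3 ≤ E.card).card

/-- The vertices lying on a set of edges. -/
def pathVerts {n : ℕ} (E : Finset (Sym2 (Fin n))) : Finset (Fin n) :=
  Finset.univ.filter fun v => ∃ e ∈ E, v ∈ e

/-- `F_{r,y,g}(D)`: the graphs with degree sequence `D` having the given colour counts. -/
def Frya (D : DegSeq) (r y g : ℕ) : Finset (SimpleGraph (Fin D.n)) :=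
  (graphs D).filter fun G => rG G = r ∧ yG G = y ∧ gG G = g

/-- The vertex set of the 2-core: the union of all sets in which every vertex has
at least two neighbours inside the set. -/
def coreSet {n : ℕ} (G : SimpleGraph (Fin n)) : Set (Fin n) :=
  ⋃₀ {S : Set (Fin n) | ∀ v ∈ S, 2 ≤ (Finset.univ.filter fun w => w ∈ S ∧ G.Adj v w).card}

/-- Degree of a vertex within the 2-core. -/
def coreDeg {n : ℕ} (G : SimpleGraph (Fin n)) (v : Fin n) : ℕ :=
  (Finset.univ.filter fun w => w ∈ coreSet G ∧ G.Adj v w).card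

/-- A kernel vertex: a vertex of the 2-core with at least three neighbours in the 2-core. -/
def IsKernelVertex {n : ℕ} (G : SimpleGraph (Fin n)) (v : Fin n) : Prop :=
  v ∈ coreSet G ∧ 3 ≤ coreDeg G v

/-- The sum of kernel degrees over all kernel vertices. -/
def kernelDegSum {n : ℕ} (G : SimpleGraph (Fin n)) : ℕ :=
  ∑ v ∈ Finset.univ.filter (fun v => IsKernelVertex G v), coreDeg G v

end

/-!
Write `h y x` for the expected time the lazy walk started at `x` needs to reach `y`.
Laziness makes `diagonal π * P ^ t` positive semidefinite, so once the walk has visited `y`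
it sits at `y` with probability at least `π y` at every later time. Hence `π y - P^t(x, y)`
is at most `π y` times the probability of not having reached `y` by time `t`, which by
Markov's inequality is at most `h y x / t`; summing over `y`, the total variation distance at
time `t` is at most `(∑ y, π y * h y x) / t`. By the random target lemma this sum does not
depend on `x`, so it is half the `π ⊗ π`-average of the commute times `h y x + h x y`.
A commute time across an edge is at most `4 |E|` (Kac's formula), and commute times are
subadditive along paths, so the sum is at most `2 |E| diam`, and `t = 8 diam |E|` gives
distance `1/4 < 1/e`.
-/

section MarkovChain

open Matrix Finset

variable {V : Type} [Fintype V] {P : Matrix V V ℝ} {π : V → ℝ} {G : SimpleGraph V}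

structure IsStationaryDistribution (P : Matrix V V ℝ) (π : V → ℝ) : Prop where
  nonneg : 0 ≤ π
  sum_eq_one : ∑ x, π x = 1
  vecMul_eq : π ᵥ* P = π

lemma mulVec_mono_of_mem_rowStochastic (hP : P ∈ rowStochastic ℝ V) {f g : V → ℝ}
    (hfg : f ≤ g) : P *ᵥ f ≤ P *ᵥ g := fun _ =>
  Finset.sum_le_sum fun z _ => mul_le_mul_of_nonneg_left (hfg z) (nonneg_of_mem_rowStochastic hP)

lemma mulVec_const_of_mem_rowStochastic (hP : P ∈ rowStochastic ℝ V) (c : ℝ) :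
    P *ᵥ Function.const V c = Function.const V c := by
  rw [show Function.const V c = c • 1 by ext; simp, mulVec_smul,
    one_vecMul_of_mem_rowStochastic hP]

lemma eq_of_forall_le_of_mulVec_le (hP : P ∈ rowStochastic ℝ V) {φ : V → ℝ} {x z : V}
    (hmin : ∀ w, φ x ≤ φ w) (hx : (P *ᵥ φ) x ≤ φ x) (hxz : 0 < P x z) :
    φ z = φ x := by
  have hsum : ∑ w, P x w * (φ w - φ x) = (P *ᵥ φ) x - φ x := by
    simp only [mul_sub, Finset.sum_sub_distrib, ← Finset.sum_mul,
      sum_row_of_mem_rowStochastic hP, one_mul, mulVec, dotProduct]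
  have hz := Finset.single_le_sum (f := fun w => P x w * (φ w - φ x))
    (fun w _ => mul_nonneg (nonneg_of_mem_rowStochastic hP) (sub_nonneg.2 (hmin w)))
    (mem_univ z)
  exact le_antisymm (by nlinarith) (hmin z)

theorem nonneg_of_mulVec_le (hP : P ∈ rowStochastic ℝ V) (hG : G.Connected)
    (hGP : ∀ x y, G.Adj x y → 0 < P x y) {B : Finset V} (hB : B.Nonempty) {φ : V → ℝ}
    (hφB : ∀ b ∈ B, 0 ≤ φ b) (hφ : ∀ x ∉ B, (P *ᵥ φ) x ≤ φ x) : 0 ≤ φ := by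
  obtain ⟨b, hb⟩ := hB
  obtain ⟨x₀, -, hx₀⟩ := Finset.exists_min_image univ φ ⟨b, mem_univ b⟩
  suffices 0 ≤ φ x₀ from fun x => this.trans (hx₀ x (mem_univ x))
  by_contra! hneg
  have hwalk : ∀ {x w : V} (p : G.Walk x w), φ x = φ x₀ → φ w = φ x₀ := by
    intro x w p
    induction p with
    | nil => exact id
    | cons hadj _ ih =>
      intro hx
      have hxB : _ ∉ B := fun h => (hφB _ h).not_gt (hx ▸ hneg)
      exact ih ((eq_of_forall_le_of_mulVec_le hP (fun w => hx ▸ hx₀ w (mem_univ w))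
        (hφ _ hxB) (hGP _ _ hadj)).trans hx)
  obtain ⟨p⟩ := hG.preconnected x₀ b
  exact (hφB b hb).not_gt (hwalk p rfl ▸ hneg)

lemma apply_eq_of_mulVec_eq (hP : P ∈ rowStochastic ℝ V) (hG : G.Connected)
    (hGP : ∀ x y, G.Adj x y → 0 < P x y) {φ : V → ℝ} (hφ : P *ᵥ φ = φ) (x y : V) :
    φ x = φ y := by
  have hle : ∀ a b, φ a ≤ φ b := fun a b => by
    have := nonneg_of_mulVec_le hP hG hGP (B := {a}) (φ := φ - Function.const V (φ a))
      ⟨a, mem_singleton_self a⟩ (by simp) (fun x _ => by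
        rw [mulVec_sub, mulVec_const_of_mem_rowStochastic hP, hφ])
    simpa using this b
  exact le_antisymm (hle x y) (hle y x)

/-- `h x` is the expected time the chain started at `x` needs to reach `y`, characterised by
first-step analysis. -/
def IsHittingTime (P : Matrix V V ℝ) (y : V) (h : V → ℝ) : Prop :=
  h y = 0 ∧ ∀ x, x ≠ y → h x = 1 + (P *ᵥ h) x

lemma eq_zero_of_mulVec_eq (hP : P ∈ rowStochastic ℝ V) (hG : G.Connected)
    (hGP : ∀ x y, G.Adj x y → 0 < P x y) {y : V} {f : V → ℝ} (hy : f y = 0)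
    (hf : ∀ x, x ≠ y → (P *ᵥ f) x = f x) : f = 0 := by
  have key : ∀ g : V → ℝ, g y = 0 → (∀ x, x ≠ y → (P *ᵥ g) x = g x) → 0 ≤ g :=
    fun g hgy hg => nonneg_of_mulVec_le hP hG hGP ⟨y, mem_singleton_self y⟩
      (by simp [hgy]) fun x hx => (hg x (by simpa using hx)).le
  refine le_antisymm ?_ (key f hy hf)
  simpa using key (-f) (by simp [hy]) fun x hx => by simp [mulVec_neg, hf x hx]

theorem exists_isHittingTime (hP : P ∈ rowStochastic ℝ V) (hG : G.Connected)
    (hGP : ∀ x y, G.Adj x y → 0 < P x y) (y : V) : ∃ h, IsHittingTime P y h := by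
  set A : Matrix V V ℝ := 1 - P.updateRow y 0
  have hA : ∀ f, A *ᵥ f = f - Function.update (P *ᵥ f) y 0 := fun f => by
    simp [A, sub_mulVec, updateRow_mulVec]
  have hker : ∀ f, A *ᵥ f = 0 → f = 0 := fun f hf => by
    rw [hA, sub_eq_zero] at hf
    refine eq_zero_of_mulVec_eq hP hG hGP (y := y) (by rw [hf]; simp) fun x hx => ?_
    rw [congrFun hf x, Function.update_of_ne hx]
  have hinj : Function.Injective A.mulVec := fun f g hfg =>
    sub_eq_zero.1 (hker _ (by rw [mulVec_sub, hfg, sub_self]))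
  obtain ⟨h, hh⟩ := mulVec_surjective_iff_isUnit.2 (mulVec_injective_iff_isUnit.1 hinj)
    (Function.update 1 y 0)
  rw [hA] at hh
  refine ⟨h, by simpa using congrFun hh y, fun x hx => ?_⟩
  have := congrFun hh x
  simp only [Pi.sub_apply, Function.update_of_ne hx, Pi.one_apply] at this
  linarith

namespace IsHittingTime

variable {y : V} {h : V → ℝ}

lemma nonneg (hh : IsHittingTime P y h) (hP : P ∈ rowStochastic ℝ V) (hG : G.Connected)
    (hGP : ∀ x y, G.Adj x y → 0 < P x y) (x : V) : 0 ≤ h x :=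
  nonneg_of_mulVec_le hP hG hGP ⟨y, mem_singleton_self y⟩ (by simp [hh.1]) (fun w hw => by
    rw [hh.2 w (by simpa using hw)]
    linarith) x

lemma sub_mulVec_eq (hh : IsHittingTime P y h) :
    h - P *ᵥ h = 1 - Pi.single y (1 + (P *ᵥ h) y) := by
  ext x
  rcases eq_or_ne x y with rfl | hx
  · simp [hh.1]
  · simp [hh.2 x hx, hx]

/-- Kac's formula: `1 + (P *ᵥ h) y` is the expected return time to `y`. -/
lemma kac (hh : IsHittingTime P y h) (hπ : IsStationaryDistribution P π) :
    π y * (1 + (P *ᵥ h) y) = 1 := by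
  have := congrArg (π ⬝ᵥ ·) hh.sub_mulVec_eq
  simp only [dotProduct_sub, dotProduct_mulVec, hπ.vecMul_eq, sub_self, dotProduct_one,
    hπ.sum_eq_one, dotProduct_single] at this
  linarith

lemma le_add {z : V} {k : V → ℝ} (hh : IsHittingTime P y h) (hk : IsHittingTime P z k)
    (hP : P ∈ rowStochastic ℝ V) (hG : G.Connected) (hGP : ∀ x y, G.Adj x y → 0 < P x y)
    (x : V) : h x ≤ k x + h z := by
  have := nonneg_of_mulVec_le hP hG hGP (B := {y, z}) (φ := k + Function.const V (h z) - h)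
    ⟨y, by simp⟩ (by
      simp only [mem_insert, mem_singleton, forall_eq_or_imp, forall_eq, Pi.sub_apply,
        Pi.add_apply, Function.const_apply, hh.1, hk.1]
      exact ⟨by linarith [hk.nonneg hP hG hGP y, hh.nonneg hP hG hGP z], by simp⟩)
    fun w hw => by
      simp only [mem_insert, mem_singleton, not_or] at hw
      simp only [mulVec_sub, mulVec_add, mulVec_const_of_mem_rowStochastic hP, Pi.sub_apply,
        Pi.add_apply, Function.const_apply, hh.2 w hw.1, hk.2 w hw.2]
      linarith
  simpa [add_comm] using this x

lemma commute_mul_le_one {u v : V} {f g : V → ℝ} (hf : IsHittingTime P u f)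
    (hg : IsHittingTime P v g) (hP : P ∈ rowStochastic ℝ V) (hG : G.Connected)
    (hGP : ∀ x y, G.Adj x y → 0 < P x y) (hπ : IsStationaryDistribution P π) :
    π u * P u v * (g u + f v) ≤ 1 := by
  rcases eq_or_ne u v with rfl | huv
  · simp [hf.1, hg.1]
  have hsum : ∑ z, P u z * (g u - g z + f z) = 1 + (P *ᵥ f) u := by
    have := hg.2 u huv
    simp only [mul_add, mul_sub, Finset.sum_add_distrib, Finset.sum_sub_distrib,
      ← Finset.sum_mul, sum_row_of_mem_rowStochastic hP, one_mul] at this ⊢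
    simp only [mulVec, dotProduct] at this ⊢
    linarith
  -- every summand is nonnegative by the triangle inequality `g z ≤ f z + g u`
  have hterm := Finset.single_le_sum (f := fun z => P u z * (g u - g z + f z))
    (fun z _ => mul_nonneg (nonneg_of_mem_rowStochastic hP)
      (by linarith [hg.le_add hf hP hG hGP z])) (mem_univ v)
  simp only [hg.1, sub_zero, hsum] at hterm
  calc π u * P u v * (g u + f v) = π u * (P u v * (g u + f v)) := by ring
    _ ≤ π u * (1 + (P *ᵥ f) u) := mul_le_mul_of_nonneg_left hterm (hπ.nonneg u)
    _ = 1 := hf.kac hπ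

end IsHittingTime

lemma commute_le_of_adj {h : V → V → ℝ} (hh : ∀ y, IsHittingTime P y (h y))
    (hP : P ∈ rowStochastic ℝ V) (hG : G.Connected) (hGP : ∀ x y, G.Adj x y → 0 < P x y)
    (hπ : IsStationaryDistribution P π) {R : ℝ} {a b : V}
    (hR : 1 ≤ R * (π a * P a b)) : h b a + h a b ≤ R := by
  have hedge := (hh a).commute_mul_le_one (hh b) hP hG hGP hπ
  have hc : 0 ≤ h b a + h a b :=
    add_nonneg ((hh b).nonneg hP hG hGP a) ((hh a).nonneg hP hG hGP b)
  have hm : 0 ≤ π a * P a b := mul_nonneg (hπ.nonneg a) (nonneg_of_mem_rowStochastic hP)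
  have hR0 : 0 ≤ R := by
    by_contra! hneg
    nlinarith [mul_nonpos_of_nonpos_of_nonneg hneg.le hm]
  nlinarith [mul_le_mul_of_nonneg_left hR hc, mul_le_mul_of_nonneg_left hedge hR0]

lemma commute_le_mul_length {h : V → V → ℝ} (hh : ∀ y, IsHittingTime P y (h y))
    (hP : P ∈ rowStochastic ℝ V) (hG : G.Connected) (hGP : ∀ x y, G.Adj x y → 0 < P x y)
    (hπ : IsStationaryDistribution P π) {R : ℝ}
    (hR : ∀ a b, G.Adj a b → 1 ≤ R * (π a * P a b)) {x y : V} (p : G.Walk x y) :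
    h y x + h x y ≤ R * p.length := by
  induction p with
  | nil => simp [(hh _).1]
  | @cons a w b hadj q ih =>
    have hab := (hh b).le_add (hh w) hP hG hGP a
    have hba := (hh a).le_add (hh w) hP hG hGP b
    have hedge := commute_le_of_adj hh hP hG hGP hπ (hR a w hadj)
    rw [SimpleGraph.Walk.length_cons, Nat.cast_succ]
    linarith

/-- Random target lemma. -/
lemma sum_mul_hittingTime_eq {h : V → V → ℝ} (hh : ∀ y, IsHittingTime P y (h y))
    (hP : P ∈ rowStochastic ℝ V) (hG : G.Connected) (hGP : ∀ x y, G.Adj x y → 0 < P x y)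
    (hπ : IsStationaryDistribution P π) (x x' : V) :
    ∑ y, π y * h y x = ∑ y, π y * h y x' := by
  have hΓ : (fun x => ∑ y, π y * h y x) = ∑ y, π y • h y := by
    ext x
    simp [Finset.sum_apply]
  have hterm : ∀ x y, π y * (h y x - (P *ᵥ h y) x) = π y - if y = x then 1 else 0 := by
    intro x y
    rw [← Pi.sub_apply (h y), (hh y).sub_mulVec_eq]
    rcases eq_or_ne y x with rfl | hyx
    · have := (hh y).kac hπ
      simp only [Pi.sub_apply, Pi.one_apply, Pi.single_eq_same, if_true]
      linarith
    · simp [hyx, Ne.symm hyx]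
  -- by Kac's formula the function is harmonic, hence constant
  refine apply_eq_of_mulVec_eq (φ := fun x => ∑ y, π y * h y x) hP hG hGP ?_ x x'
  ext x
  have := Finset.sum_congr rfl fun y (_ : y ∈ univ) => hterm x y
  rw [Finset.sum_sub_distrib, hπ.sum_eq_one, Finset.sum_ite_eq' univ x, if_pos (mem_univ x),
    sub_self] at this
  simp only [mul_sub, Finset.sum_sub_distrib, sub_eq_zero] at this
  rw [this, hΓ, mulVec_sum]
  simp [Finset.sum_apply, mulVec_smul]

lemma sum_mul_hittingTime_le {h : V → V → ℝ} (hh : ∀ y, IsHittingTime P y (h y))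
    (hP : P ∈ rowStochastic ℝ V) (hG : G.Connected) (hGP : ∀ x y, G.Adj x y → 0 < P x y)
    (hπ : IsStationaryDistribution P π) {C : ℝ} (hC : ∀ x y, h y x + h x y ≤ C) (x : V) :
    ∑ y, π y * h y x ≤ C / 2 := by
  have hmean : ∑ y, π y * h y x = ∑ b, ∑ y, π b * π y * h y b := by
    simp only [mul_assoc, ← Finset.mul_sum,
      ← sum_mul_hittingTime_eq hh hP hG hGP hπ x, ← Finset.sum_mul, hπ.sum_eq_one, one_mul]
  have hswap : ∑ b, ∑ y, π b * π y * h y b = ∑ b, ∑ y, π b * π y * h b y := by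
    rw [Finset.sum_comm]
    simp only [mul_comm (π _) (π _)]
  have hbound : ∑ b, ∑ y, π b * π y * (h y b + h b y) ≤ C := by
    calc ∑ b, ∑ y, π b * π y * (h y b + h b y) ≤ ∑ b, ∑ y, π b * π y * C :=
          Finset.sum_le_sum fun b _ => Finset.sum_le_sum fun y _ =>
            mul_le_mul_of_nonneg_left (hC b y) (mul_nonneg (hπ.nonneg b) (hπ.nonneg y))
      _ = C := by simp [← Finset.sum_mul, ← Finset.mul_sum, hπ.sum_eq_one]
  simp only [mul_add, Finset.sum_add_distrib] at hbound
  linarith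

lemma IsStationaryDistribution.of_reversible (hP : P ∈ rowStochastic ℝ V) (hπ0 : 0 ≤ π)
    (hπ1 : ∑ x, π x = 1) (hrev : ∀ x y, π x * P x y = π y * P y x) :
    IsStationaryDistribution P π where
  nonneg := hπ0
  sum_eq_one := hπ1
  vecMul_eq := by
    ext y
    simp [vecMul, dotProduct, hrev _ y, ← Finset.mul_sum, sum_row_of_mem_rowStochastic hP]

lemma IsStationaryDistribution.vecMul_pow (hπ : IsStationaryDistribution P π) (t : ℕ) :
    π ᵥ* P ^ t = π := by
  induction t with
  | zero => simp
  | succ t ih => rw [pow_succ, ← vecMul_vecMul, ih, hπ.vecMul_eq]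

lemma posSemidef_diagonal_mul (hP : P ∈ rowStochastic ℝ V) (hπ : IsStationaryDistribution P π)
    (hrev : ∀ x y, π x * P x y = π y * P y x) (hlazy : ∀ x, 1 / 2 ≤ P x x) :
    (diagonal π * P).PosSemidef := by
  refine .of_dotProduct_mulVec_nonneg ?_ fun f => ?_
  · ext x y
    simp [diagonal_mul, hrev y x]
  set Q := ∑ x, ∑ y, π x * P x y * f x * f y
  have hQ : star f ⬝ᵥ ((diagonal π * P) *ᵥ f) = Q := by
    simp only [star_trivial, dotProduct, mulVec, diagonal_mul, Finset.mul_sum, Q]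
    exact Finset.sum_congr rfl fun x _ => Finset.sum_congr rfl fun y _ => by ring
  have hrow : ∑ x, ∑ y, π x * P x y * f x ^ 2 = ∑ x, π x * f x ^ 2 :=
    Finset.sum_congr rfl fun x _ => by
      rw [← Finset.sum_mul, ← Finset.mul_sum, sum_row_of_mem_rowStochastic hP, mul_one]
  have hcol : ∑ x, ∑ y, π x * P x y * f y ^ 2 = ∑ y, π y * f y ^ 2 := by
    rw [Finset.sum_comm]
    refine Finset.sum_congr rfl fun y _ => ?_
    rw [← Finset.sum_mul, ← congrFun hπ.vecMul_eq y]
    rfl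
  have hsum : ∑ x, ∑ y, π x * P x y * (f x + f y) ^ 2 = 2 * ∑ x, π x * f x ^ 2 + 2 * Q := by
    have hexp : ∀ x y, π x * P x y * (f x + f y) ^ 2 = π x * P x y * f x ^ 2
        + π x * P x y * f y ^ 2 + 2 * (π x * P x y * f x * f y) := fun x y => by ring
    simp only [hexp, Finset.sum_add_distrib, ← Finset.mul_sum, hrow, hcol, Q]
    ring
  -- by laziness the diagonal terms alone contribute `2 * ∑ x, π x * f x ^ 2` to `hsum`
  have hdiag :
      ∑ x, π x * P x x * (f x + f x) ^ 2 ≤ ∑ x, ∑ y, π x * P x y * (f x + f y) ^ 2 :=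
    Finset.sum_le_sum fun x _ =>
      Finset.single_le_sum (f := fun y => π x * P x y * (f x + f y) ^ 2)
      (fun _ _ => mul_nonneg (mul_nonneg (hπ.nonneg x) (nonneg_of_mem_rowStochastic hP))
        (sq_nonneg _)) (mem_univ x)
  have hlow : 2 * ∑ x, π x * f x ^ 2 ≤ ∑ x, π x * P x x * (f x + f x) ^ 2 := by
    rw [Finset.mul_sum]
    refine Finset.sum_le_sum fun x _ => ?_
    nlinarith [mul_nonneg (mul_nonneg (hπ.nonneg x) (sub_nonneg.2 (hlazy x))) (sq_nonneg (f x))]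
  rw [hQ]
  linarith

lemma posSemidef_diagonal_mul_pow (hP : P ∈ rowStochastic ℝ V)
    (hπ : IsStationaryDistribution P π) (hrev : ∀ x y, π x * P x y = π y * P y x)
    (hlazy : ∀ x, 1 / 2 ≤ P x x) (t : ℕ) : (diagonal π * P ^ t).PosSemidef := by
  have hsemi : SemiconjBy (diagonal π) P Pᵀ := by
    ext x y
    simp [diagonal_mul, mul_diagonal, hrev x y, mul_comm]
  have hconj : ∀ s r,
      diagonal π * P ^ (2 * s + r) = (P ^ s)ᴴ * (diagonal π * P ^ r) * P ^ s := by
    intro s r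
    rw [conjTranspose_eq_transpose_of_trivial, transpose_pow, ← mul_assoc,
      ← (hsemi.pow_right s).eq, show 2 * s + r = s + r + s by ring, pow_add, pow_add]
    simp only [mul_assoc]
  obtain ⟨s, rfl | rfl⟩ := Nat.even_or_odd' t
  · have := hconj s 0
    rw [add_zero, pow_zero, mul_one] at this
    rw [this]
    exact (PosSemidef.diagonal hπ.nonneg).conjTranspose_mul_mul_same _
  · rw [hconj s 1, pow_one]
    exact (posSemidef_diagonal_mul hP hπ hrev hlazy).conjTranspose_mul_mul_same _

lemma le_pow_apply_self (hP : P ∈ rowStochastic ℝ V) (hπ : IsStationaryDistribution P π)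
    (hrev : ∀ x y, π x * P x y = π y * P y x) (hlazy : ∀ x, 1 / 2 ≤ P x x) (t : ℕ)
    (y : V) : π y ≤ (P ^ t) y y := by
  have hA1 : (diagonal π * P ^ t) *ᵥ 1 = π := by
    rw [← mulVec_mulVec, one_vecMul_of_mem_rowStochastic (pow_mem hP t)]
    ext; simp [mulVec_diagonal]
  have h1A : 1 ᵥ* (diagonal π * P ^ t) = π := by
    rw [← vecMul_vecMul, show 1 ᵥ* diagonal π = π by ext; simp [vecMul_diagonal],
      hπ.vecMul_pow t]
  have hyy : Pi.single y 1 ⬝ᵥ ((diagonal π * P ^ t) *ᵥ Pi.single y 1) = π y * (P ^ t) y y :=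
    by simp [diagonal_mul]
  have h1y : 1 ⬝ᵥ ((diagonal π * P ^ t) *ᵥ Pi.single y 1) = π y := by
    rw [dotProduct_mulVec, h1A, dotProduct_single, mul_one]
  have hq := (posSemidef_diagonal_mul_pow hP hπ hrev hlazy t).dotProduct_mulVec_nonneg
    (Pi.single y 1 - π y • 1)
  simp only [star_trivial, mulVec_sub, mulVec_smul, dotProduct_sub, sub_dotProduct,
    smul_dotProduct, dotProduct_smul, hyy, h1y, hA1, single_dotProduct, one_dotProduct,
    hπ.sum_eq_one, smul_eq_mul, one_mul, mul_one, sub_self, mul_zero, sub_zero] at hq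
  have hy0 : 0 ≤ π y := hπ.nonneg y
  rcases hy0.eq_or_lt with hy | hy
  · exact hy ▸ nonneg_of_mem_rowStochastic (pow_mem hP t)
  · nlinarith

/-- `survival P y t x` is the probability that the chain started at `x` avoids `y` at
times `1, …, t`. -/
noncomputable def survival (P : Matrix V V ℝ) (y : V) : ℕ → V → ℝ
  | 0 => 1
  | t + 1 => P *ᵥ Function.update (survival P y t) y 0

section survival

variable {y : V}

lemma survival_antitone (hP : P ∈ rowStochastic ℝ V) : Antitone (survival P y) := by
  have hupd : ∀ {f g : V → ℝ}, f ≤ g → Function.update f y 0 ≤ Function.update g y 0 :=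
    fun hfg z => by rcases eq_or_ne z y with rfl | hz <;> simp [*, hfg z]
  refine antitone_nat_of_succ_le fun t => ?_
  induction t with
  | zero =>
    refine (mulVec_mono_of_mem_rowStochastic hP ?_).trans_eq
      (one_vecMul_of_mem_rowStochastic hP)
    intro z
    rcases eq_or_ne z y with rfl | hz <;> simp [survival, *]
  | succ t ih => exact mulVec_mono_of_mem_rowStochastic hP (hupd ih)

lemma sum_survival_le {h : V → ℝ} (hh : IsHittingTime P y h) (hP : P ∈ rowStochastic ℝ V)
    (hG : G.Connected) (hGP : ∀ x y, G.Adj x y → 0 < P x y) (T : ℕ) {x : V} (hx : x ≠ y) :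
    ∑ s ∈ range T, survival P y s x ≤ h x := by
  induction T generalizing x with
  | zero => simpa using hh.nonneg hP hG hGP x
  | succ T ih =>
    have hle : ∑ s ∈ range T, Function.update (survival P y s) y 0 ≤ h := fun z => by
      rcases eq_or_ne z y with rfl | hz
      · simp [hh.1]
      · simpa [Finset.sum_apply, hz] using ih hz
    rw [Finset.sum_range_succ', hh.2 x hx, add_comm]
    simp only [survival, ← Finset.sum_apply, ← mulVec_sum]
    simpa using mulVec_mono_of_mem_rowStochastic hP hle x

lemma mul_one_sub_survival_le (hP : P ∈ rowStochastic ℝ V)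
    (hdiag : ∀ s, π y ≤ (P ^ s) y y) (t : ℕ) (x : V) :
    π y * (1 - survival P y t x) ≤ (P ^ t) x y := by
  induction t generalizing x with
  | zero =>
    simpa [survival] using nonneg_of_mem_rowStochastic (pow_mem hP 0) (i := x) (j := y)
  | succ t ih =>
    have hle : π y • (1 - Function.update (survival P y t) y 0) ≤ fun z => (P ^ t) z y :=
      fun z => by
        rcases eq_or_ne z y with rfl | hz
        · simpa using hdiag t
        · simpa [hz] using ih z
    have := mulVec_mono_of_mem_rowStochastic hP hle x
    rw [mulVec_smul, mulVec_sub, one_vecMul_of_mem_rowStochastic hP] at this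
    simpa [survival, pow_succ', mul_apply, mulVec, dotProduct] using this

end survival

lemma tvDist_le_sum {μ ν c : V → ℝ} (hμ : ∑ x, μ x = 1) (hν : ∑ x, ν x = 1)
    (hc : 0 ≤ c) (hle : ∀ x, ν x - μ x ≤ c x) : tvDist μ ν ≤ ∑ x, c x := by
  have hA : ∀ A : Finset V, ∑ x ∈ A, ν x - ∑ x ∈ A, μ x ≤ ∑ x, c x := fun A => by
    rw [← Finset.sum_sub_distrib]
    exact (Finset.sum_le_sum fun x _ => hle x).trans
      (Finset.sum_le_sum_of_subset_of_nonneg (subset_univ A) fun x _ _ => hc x)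
  refine ciSup_le fun A => abs_le.2 ⟨by linarith [hA A], ?_⟩
  have hμA := Finset.sum_add_sum_compl A μ
  have hνA := Finset.sum_add_sum_compl A ν
  linarith [hA Aᶜ]

lemma mul_sub_pow_apply_le {y : V} {h : V → ℝ} (hh : IsHittingTime P y h)
    (hP : P ∈ rowStochastic ℝ V) (hG : G.Connected) (hGP : ∀ x y, G.Adj x y → 0 < P x y)
    (hπ : IsStationaryDistribution P π) (hrev : ∀ x y, π x * P x y = π y * P y x)
    (hlazy : ∀ x, 1 / 2 ≤ P x x) (t : ℕ) (x : V) :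
    t * (π y - (P ^ t) x y) ≤ π y * h x := by
  have hdiag := fun s => le_pow_apply_self hP hπ hrev hlazy s y
  rcases eq_or_ne x y with rfl | hx
  · rw [hh.1, mul_zero]
    exact mul_nonpos_of_nonneg_of_nonpos t.cast_nonneg (sub_nonpos.2 (hdiag t))
  have hsurv : (t : ℝ) * survival P y t x ≤ ∑ s ∈ range t, survival P y s x := by
    simpa using Finset.card_nsmul_le_sum (range t) (survival P y · x) (survival P y t x)
      fun s hs => survival_antitone hP (mem_range.1 hs).le x
  have := mul_one_sub_survival_le hP hdiag t x
  have hπy : 0 ≤ π y := hπ.nonneg y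
  nlinarith [sum_survival_le hh hP hG hGP t hx, mul_le_mul_of_nonneg_left hsurv hπy]

theorem mul_tvDist_pow_le (hP : P ∈ rowStochastic ℝ V) (hG : G.Connected)
    (hGP : ∀ x y, G.Adj x y → 0 < P x y) (hπ : IsStationaryDistribution P π)
    (hrev : ∀ x y, π x * P x y = π y * P y x) (hlazy : ∀ x, 1 / 2 ≤ P x x) {R : ℝ}
    (hR0 : 0 ≤ R) (hR : ∀ a b, G.Adj a b → 1 ≤ R * (π a * P a b)) {D : ℕ}
    (hD : ∀ x y, G.dist x y ≤ D) {t : ℕ} (ht : 0 < t) (x : V) :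
    t * tvDist (fun y => (P ^ t) x y) π ≤ R * D / 2 := by
  choose h hh using exists_isHittingTime hP hG hGP
  have hcomm : ∀ x y, h y x + h x y ≤ R * D := fun x y => by
    obtain ⟨p, hp⟩ := hG.exists_walk_length_eq_dist x y
    refine (commute_le_mul_length hh hP hG hGP hπ hR p).trans ?_
    rw [hp]
    exact mul_le_mul_of_nonneg_left (by exact_mod_cast hD x y) hR0
  have htR : (0 : ℝ) < t := by exact_mod_cast ht
  have htv := tvDist_le_sum (μ := fun y => (P ^ t) x y) (ν := π)
    (c := fun y => π y * h y x / t) (sum_row_of_mem_rowStochastic (pow_mem hP t) x)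
    hπ.sum_eq_one (fun y => div_nonneg (mul_nonneg (hπ.nonneg y) ((hh y).nonneg hP hG hGP x))
      htR.le) fun y => by
        rw [le_div_iff₀ htR, mul_comm]
        exact mul_sub_pow_apply_le (hh y) hP hG hGP hπ hrev hlazy t x
  rw [← Finset.sum_div, le_div_iff₀ htR] at htv
  linarith [sum_mul_hittingTime_le hh hP hG hGP hπ hcomm x]

end MarkovChain

section LazyWalk

open Matrix Finset

variable {V : Type} [Fintype V] {H : SimpleGraph V}

lemma edges_eq_edgeFinset (H : SimpleGraph V) : edges H = H.edgeFinset := by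
  ext e
  simp [edges]

lemma deg_eq_degree (H : SimpleGraph V) (v : V) : deg H v = H.degree v := by
  rw [deg, ← SimpleGraph.neighborFinset_eq_filter, SimpleGraph.card_neighborFinset_eq_degree]

lemma deg_pos (hconn : H.Connected) (hE : (edges H).Nonempty) (v : V) : 0 < deg H v := by
  obtain ⟨⟨a, b⟩, he⟩ := hE
  have : Nontrivial V := ⟨a, b, H.ne_of_adj (by simpa [edges] using he)⟩
  rw [deg_eq_degree]
  exact hconn.preconnected.degree_pos_of_nontrivial v

lemma dist_le_graphDiam (H : SimpleGraph V) (x y : V) : H.dist x y ≤ graphDiam H :=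
  Finset.le_sup (f := fun p : V × V => H.dist p.1 p.2) (mem_univ (x, y))

lemma graphDiam_pos (hE : (edges H).Nonempty) : 0 < graphDiam H := by
  obtain ⟨⟨a, b⟩, he⟩ := hE
  have hab : H.Adj a b := by simpa [edges] using he
  exact (SimpleGraph.dist_eq_one_iff_adj.2 hab ▸ one_pos).trans_le (dist_le_graphDiam H a b)

lemma lazyP_self (H : SimpleGraph V) (x : V) : lazyP H x x = 1 / 2 := by
  simp [lazyP]

lemma lazyP_of_adj {x y : V} (h : H.Adj x y) : lazyP H x y = 1 / (2 * deg H x) := by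
  simp [lazyP, H.ne_of_adj h, h]

lemma lazyP_pos_of_adj {x y : V} (h : H.Adj x y) : 0 < lazyP H x y := by
  have : 0 < deg H x := by rw [deg_eq_degree]; exact h.degree_pos_left
  rw [lazyP_of_adj h]
  positivity

lemma lazyP_mem_rowStochastic (hdeg : ∀ v, 0 < deg H v) : lazyP H ∈ rowStochastic ℝ V := by
  refine mem_rowStochastic_iff_sum.2 ⟨fun x y => ?_, fun x => ?_⟩
  · simp only [lazyP, of_apply]
    split_ifs <;> positivity
  · have hx : (0 : ℝ) < deg H x := by exact_mod_cast hdeg x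
    have hsplit : ∀ y, lazyP H x y
        = (if x = y then 1 / 2 else 0) + if H.Adj x y then 1 / (2 * (deg H x : ℝ)) else 0 :=
      fun y => by by_cases hxy : x = y <;> simp [lazyP, hxy]
    simp only [hsplit, Finset.sum_add_distrib, Finset.sum_ite_eq, mem_univ, if_true,
      ← Finset.sum_filter, Finset.sum_const, nsmul_eq_mul]
    rw [← deg]
    field_simp
    ring

lemma statDist_mul_lazyP_of_adj {x y : V} (h : H.Adj x y) :
    statDist H x * lazyP H x y = 1 / (4 * (edges H).card) := by
  have : (0 : ℝ) < deg H x := by exact_mod_cast (deg_eq_degree H x ▸ h.degree_pos_left)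
  rw [statDist, lazyP_of_adj h]
  field_simp
  ring

lemma statDist_mul_lazyP_comm (H : SimpleGraph V) (x y : V) :
    statDist H x * lazyP H x y = statDist H y * lazyP H y x := by
  rcases eq_or_ne x y with rfl | hxy
  · rfl
  by_cases h : H.Adj x y
  · rw [statDist_mul_lazyP_of_adj h, statDist_mul_lazyP_of_adj h.symm]
  · have h' : ¬H.Adj y x := fun h' => h h'.symm
    simp [lazyP, hxy, Ne.symm hxy, h, h']

lemma isStationaryDistribution_statDist (hdeg : ∀ v, 0 < deg H v)
    (hE : (edges H).Nonempty) : IsStationaryDistribution (lazyP H) (statDist H) := by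
  refine .of_reversible (lazyP_mem_rowStochastic hdeg) (fun x => by unfold statDist; positivity)
    ?_ (statDist_mul_lazyP_comm H)
  have hm : (0 : ℝ) < (edges H).card := by exact_mod_cast hE.card_pos
  have hsum : ∑ v, (deg H v : ℝ) = 2 * (edges H).card := by
    simp only [deg_eq_degree, edges_eq_edgeFinset]
    exact_mod_cast H.sum_degrees_eq_twice_card_edges
  simp only [statDist, ← Finset.sum_div, hsum]
  field_simp

end LazyWalk

/-- Theorem 1.3: the mixing time of a connected graph is at most
`8 · diam(H) · |E(H)|`. -/
theorem mixingTime_le_diam_mul_edges {V : Type} [Fintype V] (H : SimpleGraph V)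
    (hconn : H.Connected) (hE : (edges H).Nonempty) :
    mixingTime H ≤ 8 * graphDiam H * (edges H).card := by
  have hdeg := deg_pos hconn hE
  have hm : (0 : ℝ) < (edges H).card := by exact_mod_cast hE.card_pos
  have ht : 0 < 8 * graphDiam H * (edges H).card :=
    Nat.mul_pos (Nat.mul_pos (by norm_num) (graphDiam_pos hE)) hE.card_pos
  refine Finset.sup_le fun i _ => Nat.sInf_le ?_
  have htv := mul_tvDist_pow_le (lazyP_mem_rowStochastic hdeg) hconn
    (fun _ _ => lazyP_pos_of_adj) (isStationaryDistribution_statDist hdeg hE)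
    (statDist_mul_lazyP_comm H) (fun x => (lazyP_self H x).ge) (R := 4 * (edges H).card)
    (by positivity)
    (fun _ _ hab => by rw [statDist_mul_lazyP_of_adj hab, mul_one_div_cancel (by positivity)])
    (dist_le_graphDiam H) ht i
  have h4 : (1 : ℝ) / 4 < (Real.exp 1)⁻¹ := by
    rw [one_div]
    exact inv_strictAnti₀ (Real.exp_pos 1) (Real.exp_one_lt_d9.trans (by norm_num))
  have htR : (0 : ℝ) < 8 * graphDiam H * (edges H).card := by exact_mod_cast ht
  push_cast at htv htR
  exact (le_of_mul_le_mul_left (htv.trans_eq (by ring)) htR).trans_lt h4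

end RandomGraphPaper
end

section
/- Let ρ, μ ∈ (0,1) and D > 0 be constants, and let λ > 0 be sufficiently small in terms of μ, ρ and D (i.e., there exists λ₀ > 0 such that the following holds for all λ ∈ (0, λ₀]). Let (D_ℓ)_{ℓ≥1} be a sequence of feasible degree sequences with all degrees positive such that every D_ℓ has a μ-center, Σ_{i : d_i ≥ λ√m} d_i > ρ·μ¹⁰·m, and d_{n−3} ≥ m/(D·log m). Then with high probability every vertex of G(D_ℓ) whose degree is at least n^{1/3}/log m but less than λ·√m is adjacent to some vertex of degree at least λ·√m. -/
/-!
Fix a vertex `v` of medium degree `d_v ≤ K = ⌊λ√m⌋` and call a graph bad for `v` if every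
neighbour of `v` has degree at most `K`. The four vertices of largest degree have degree at least
`T ≥ m / (D log m)`, far above `K`. The switching that replaces the edges `vx, uy` by `vu, xy`
(`x` a low-degree neighbour of `v`, `u` a top vertex) preserves the degree sequence and makes `u`
a neighbour of `v`; each graph admits at least `(d_v - 3)(T - 2 - K)` such switchings, and each
result arises from at most `∑ d_i ≈ 2m` graphs. Applying this once for each of the four top
vertices shows that `v` is bad with probability at most `(12 D log² m / n^{1/3})⁴`, and a union
bound over the `n` vertices leaves `O(log⁸ n / n^{1/3}) → 0`.
-/

open scoped Classical
open Filter

namespace RandomGraphPaper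

open Finset

section Switching

variable {V : Type}

def switch (G : SimpleGraph V) (v u x y : V) : SimpleGraph V :=
  SimpleGraph.fromEdgeSet ((G.edgeSet \ {s(v, x), s(u, y)}) ∪ {s(v, u), s(x, y)})

structure IsSwitchable (G : SimpleGraph V) (v u x y : V) : Prop where
  adj_vx : G.Adj v x
  adj_uy : G.Adj u y
  not_adj_vu : ¬ G.Adj v u
  not_adj_xy : ¬ G.Adj x y
  ne_vu : v ≠ u
  ne_vy : v ≠ y
  ne_xu : x ≠ u
  ne_xy : x ≠ y

variable {G : SimpleGraph V} {v u x y : V}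

lemma switch_comm (G : SimpleGraph V) (v u x y : V) : switch G u v y x = switch G v u x y := by
  rw [switch, switch, Set.pair_comm s(u, y), Sym2.eq_swap (a := u) (b := v),
    Sym2.eq_swap (a := y) (b := x)]

lemma switch_flip (G : SimpleGraph V) (v u x y : V) : switch G x y v u = switch G v u x y := by
  rw [switch, switch, Sym2.eq_swap (a := x) (b := v), Sym2.eq_swap (a := y) (b := u),
    Set.pair_comm s(x, y)]

lemma edgeSet_switch (hvu : v ≠ u) (hxy : x ≠ y) :
    (switch G v u x y).edgeSet = (G.edgeSet \ {s(v, x), s(u, y)}) ∪ {s(v, u), s(x, y)} := by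
  rw [switch, SimpleGraph.edgeSet_fromEdgeSet, sdiff_eq_left, Set.disjoint_left]
  rintro e (⟨he, -⟩ | rfl | rfl)
  · exact G.not_isDiag_of_mem_edgeSet he
  · simpa using hvu
  · simpa using hxy

namespace IsSwitchable

variable (h : IsSwitchable G v u x y)
include h

lemma swap : IsSwitchable G u v y x :=
  ⟨h.adj_uy, h.adj_vx, fun h' => h.not_adj_vu h'.symm, fun h' => h.not_adj_xy h'.symm,
    h.ne_vu.symm, h.ne_xu.symm, h.ne_vy.symm, h.ne_xy.symm⟩

lemma flip : IsSwitchable G x y v u :=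
  ⟨h.adj_vx.symm, h.adj_uy.symm, h.not_adj_xy, h.not_adj_vu, h.ne_xy, h.ne_xu, h.ne_vy, h.ne_vu⟩

lemma switch_adj_left (b : V) : (switch G v u x y).Adj v b ↔ G.Adj v b ∧ b ≠ x ∨ b = u := by
  have := h.adj_vx.ne
  rw [← SimpleGraph.mem_edgeSet, edgeSet_switch h.ne_vu h.ne_xy]
  simp [h.ne_vu, h.ne_vy, this]
  tauto

lemma switch_adj_of_ne {a : V} (hv : a ≠ v) (hu : a ≠ u) (hx : a ≠ x) (hy : a ≠ y) (b : V) :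
    (switch G v u x y).Adj a b ↔ G.Adj a b := by
  rw [← SimpleGraph.mem_edgeSet, edgeSet_switch h.ne_vu h.ne_xy]
  simp [hv, hu, hx, hy]

lemma switch_switch : switch (switch G v u x y) v x u y = G := by
  have hold : {s(v, x), s(u, y)} ⊆ G.edgeSet :=
    Set.insert_subset_iff.2 ⟨h.adj_vx, Set.singleton_subset_iff.2 h.adj_uy⟩
  have hnew : Disjoint (G.edgeSet \ {s(v, x), s(u, y)}) {s(v, u), s(x, y)} :=
    Set.disjoint_of_subset_left Set.sdiff_subset <| Set.disjoint_right.2 <| by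
      rintro e (rfl | rfl)
      exacts [h.not_adj_vu, h.not_adj_xy]
  rw [← SimpleGraph.edgeSet_inj, edgeSet_switch h.adj_vx.ne h.adj_uy.ne,
    edgeSet_switch h.ne_vu h.ne_xy, Set.union_sdiff_right, sdiff_eq_left.2 hnew,
    Set.sdiff_union_of_subset hold]

lemma switch_adj_xy : (switch G v u x y).Adj x y := by
  rw [← switch_flip]
  exact (h.flip.switch_adj_left y).2 (Or.inr rfl)

lemma deg_switch_left [Fintype V] : deg (switch G v u x y) v = deg G v := by
  have hnbr : (univ.filter fun w => (switch G v u x y).Adj v w) =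
      insert u ((univ.filter fun w => G.Adj v w).erase x) := by
    ext b
    simp only [mem_filter, mem_univ, true_and, mem_insert, mem_erase, h.switch_adj_left]
    tauto
  have hx : x ∈ univ.filter fun w => G.Adj v w := by simp [h.adj_vx]
  have hu : u ∉ (univ.filter fun w => G.Adj v w).erase x := by simp [h.not_adj_vu]
  rw [deg, hnbr, card_insert_of_notMem hu, card_erase_add_one hx, deg]

lemma deg_switch [Fintype V] (a : V) : deg (switch G v u x y) a = deg G a := by
  by_cases hv : a = v
  · subst hv; exact h.deg_switch_left
  by_cases hu : a = u
  · subst hu; rw [← switch_comm]; exact h.swap.deg_switch_left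
  by_cases hx : a = x
  · subst hx; rw [← switch_flip]; exact h.flip.deg_switch_left
  by_cases hy : a = y
  · subst hy; rw [← switch_flip, ← switch_comm]; exact h.flip.swap.deg_switch_left
  simp only [deg, h.switch_adj_of_ne hv hu hx hy]

lemma eq_of_switch_eq {x' y' : V} (h' : IsSwitchable G v u x' y')
    (heq : switch G v u x y = switch G v u x' y') : x = x' := by
  have hx : ¬ (switch G v u x y).Adj v x := by simp [h.switch_adj_left, h.ne_xu]
  rw [heq, h'.switch_adj_left] at hx
  by_contra hne
  exact hx (Or.inl ⟨h.adj_vx, hne⟩)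

lemma switch_inj {x' y' : V} (h' : IsSwitchable G v u x' y')
    (heq : switch G v u x y = switch G v u x' y') : x = x' ∧ y = y' :=
  ⟨h.eq_of_switch_eq h' heq,
    h.swap.eq_of_switch_eq h'.swap (by simpa only [switch_comm] using heq)⟩

end IsSwitchable

def IsSwitchAt (v u : V) (G G' : SimpleGraph V) : Prop :=
  ∃ x y, IsSwitchable G v u x y ∧ switch G v u x y = G'

/-- A switching is undone by switching back along its new edge `xy`, so every `G'` arises from at
most one graph per ordered edge of `G'`. -/
lemma card_filter_isSwitchAt_le [Fintype V] (S : Finset (SimpleGraph V)) (v u : V)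
    (G' : SimpleGraph V) : (S.filter fun G => IsSwitchAt v u G G').card ≤ ∑ a, deg G' a := by
  calc _ ≤ ((univ.sigma fun a => univ.filter (G'.Adj a)).image
          fun p => switch G' v p.1 u p.2).card := by
        refine card_le_card fun G hG => ?_
        obtain ⟨-, x, y, hs, rfl⟩ := mem_filter.1 hG
        exact mem_image.2 ⟨⟨x, y⟩, by simp [hs.switch_adj_xy], hs.switch_switch⟩
    _ ≤ (univ.sigma fun a => univ.filter (G'.Adj a)).card := card_image_le
    _ = ∑ a, deg G' a := card_sigma _ _

noncomputable def switchPairs [Fintype V] [DecidableEq V] (G : SimpleGraph V) (v u : V)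
    (s : Finset V) : Finset (Σ _ : V, V) :=
  (univ.filter (G.Adj v) \ s).sigma fun x =>
    ((univ.filter (G.Adj u) \ univ.filter (G.Adj x)).erase v).erase x

lemma mem_switchPairs [Fintype V] [DecidableEq V] {s : Finset V} {p : Σ _ : V, V} :
    p ∈ switchPairs G v u s ↔
      (G.Adj v p.1 ∧ p.1 ∉ s) ∧ G.Adj u p.2 ∧ ¬ G.Adj p.1 p.2 ∧ p.2 ≠ v ∧ p.2 ≠ p.1 := by
  simp [switchPairs]
  tauto

end Switching

variable {D : DegSeq}

lemma mem_graphs {G : SimpleGraph (Fin D.n)} : G ∈ graphs D ↔ ∀ i, deg G i = D.d i := by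
  simp [graphs]

lemma d_le_n (hD : Feasible D) (i : Fin D.n) : D.d i ≤ D.n := by
  obtain ⟨G, hG⟩ := hD
  rw [← mem_graphs.1 hG i, deg]
  exact (card_le_card (subset_univ _)).trans (by simp)

lemma sum_d_le_two_mul_mD_add_one (D : DegSeq) : ∑ i, D.d i ≤ 2 * mD D + 1 := by
  have := Nat.div_add_mod (∑ i, D.d i) 2
  have := Nat.mod_lt (∑ i, D.d i) two_pos
  rw [mD]; omega

lemma mD_le_sq (hD : Feasible D) : mD D ≤ D.n ^ 2 :=
  calc mD D ≤ ∑ i, D.d i := Nat.div_le_self _ _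
    _ ≤ ∑ _i : Fin D.n, D.n := sum_le_sum fun i _ => d_le_n hD i
    _ = D.n ^ 2 := by simp [sq]

lemma log_mD_le (hD : Feasible D) : Real.log (mD D) ≤ 2 * Real.log D.n := by
  rcases Nat.eq_zero_or_pos (mD D) with h | h
  · simpa [h] using Real.log_natCast_nonneg D.n
  · calc Real.log (mD D) ≤ Real.log ((D.n : ℝ) ^ 2) :=
          Real.log_le_log (by positivity) (by exact_mod_cast mD_le_sq hD)
      _ = 2 * Real.log D.n := by rw [Real.log_pow]; norm_num

lemma n_le_two_mul_mD_add_one (hpos : ∀ i, 0 < D.d i) : D.n ≤ 2 * mD D + 1 :=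
  calc D.n = ∑ _i : Fin D.n, 1 := by simp
    _ ≤ ∑ i, D.d i := sum_le_sum fun i _ => hpos i
    _ ≤ _ := sum_d_le_two_mul_mD_add_one D

lemma prob_add_prob_not (hD : Feasible D) (P : SimpleGraph (Fin D.n) → Prop) :
    prob D P + prob D (fun G => ¬ P G) = 1 := by
  have hG : (0 : ℝ) < (graphs D).card := by exact_mod_cast card_pos.2 hD
  rw [prob, prob, ← add_div, div_eq_one_iff_eq hG.ne']
  norm_cast
  convert card_filter_add_card_filter_not (s := graphs D) P

lemma whp_of_tendsto_prob_not {Ds : ℕ → DegSeq} {P : ∀ ℓ, SimpleGraph (Fin (Ds ℓ).n) → Prop}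
    (hD : ∀ ℓ, Feasible (Ds ℓ))
    (h : Tendsto (fun ℓ => prob (Ds ℓ) fun G => ¬ P ℓ G) atTop (nhds 0)) : WHP Ds P := by
  have := (tendsto_const_nhds (x := (1 : ℝ))).sub h
  rw [sub_zero] at this
  exact this.congr fun ℓ => by linarith [prob_add_prob_not (hD ℓ) (P ℓ)]

noncomputable def lowNeighbourGraphs (D : DegSeq) (K : ℕ) (v : Fin D.n) (s : Finset (Fin D.n)) :
    Finset (SimpleGraph (Fin D.n)) :=
  (graphs D).filter fun G => (∀ w, G.Adj v w → w ∈ s ∨ D.d w ≤ K) ∧ ∀ w ∈ s, G.Adj v w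

section Step

variable {K : ℕ} {v u : Fin D.n} {s : Finset (Fin D.n)} {G : SimpleGraph (Fin D.n)}

lemma card_switchPairs_ge (hG : G ∈ lowNeighbourGraphs D K v s) :
    (D.d v - s.card) * (D.d u - 2 - K) ≤ (switchPairs G v u s).card := by
  obtain ⟨hGD, hlow, -⟩ := mem_filter.1 hG
  have hdeg := mem_graphs.1 hGD
  rw [switchPairs, card_sigma]
  refine (Nat.mul_le_mul_right _ ?_).trans (card_nsmul_le_sum _ _ _ fun x hx => ?_)
  · simpa [← hdeg v, deg] using le_card_sdiff s (univ.filter (G.Adj v))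
  · have hxK : D.d x ≤ K := by
      simp only [Finset.mem_sdiff, mem_filter, mem_univ, true_and] at hx
      exact (hlow x hx.1).resolve_left hx.2
    have h1 := le_card_sdiff (univ.filter (G.Adj x)) (univ.filter (G.Adj u))
    have h2 := pred_card_le_card_erase
      (s := univ.filter (G.Adj u) \ univ.filter (G.Adj x)) (a := v)
    have h3 := pred_card_le_card_erase
      (s := (univ.filter (G.Adj u) \ univ.filter (G.Adj x)).erase v) (a := x)
    have e1 : (univ.filter (G.Adj u)).card = D.d u := hdeg u
    have e2 : (univ.filter (G.Adj x)).card = D.d x := hdeg x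
    omega

lemma isSwitchable_of_mem_switchPairs (hG : G ∈ lowNeighbourGraphs D K v s) (hvu : v ≠ u)
    (huK : K < D.d u) (hus : u ∉ s) {p : Σ _ : Fin D.n, Fin D.n}
    (hp : p ∈ switchPairs G v u s) : IsSwitchable G v u p.1 p.2 := by
  obtain ⟨-, hlow, -⟩ := mem_filter.1 hG
  obtain ⟨x, y⟩ := p
  obtain ⟨⟨hvx, hxs⟩, huy, hxy, hyv, hyx⟩ := mem_switchPairs.1 hp
  refine ⟨hvx, huy, fun hvu' => ?_, hxy, hvu, hyv.symm, fun hxu => ?_, hyx.symm⟩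
  · rcases hlow u hvu' with h | h
    exacts [hus h, by omega]
  · subst hxu
    rcases hlow _ hvx with h | h
    exacts [hxs h, by omega]

lemma switch_mem_lowNeighbourGraphs (hG : G ∈ lowNeighbourGraphs D K v s) {x y : Fin D.n}
    (hs : IsSwitchable G v u x y) (hxs : x ∉ s) :
    switch G v u x y ∈ lowNeighbourGraphs D K v (insert u s) := by
  obtain ⟨hGD, hlow, hsub⟩ := mem_filter.1 hG
  refine mem_filter.2 ⟨mem_graphs.2 fun i => (hs.deg_switch i).trans (mem_graphs.1 hGD i),
    fun w hw => ?_, fun w hw => ?_⟩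
  · rcases (hs.switch_adj_left w).1 hw with ⟨hvw, -⟩ | rfl
    · exact (hlow w hvw).imp_left mem_insert_of_mem
    · exact Or.inl (mem_insert_self _ _)
  · rw [hs.switch_adj_left]
    rcases mem_insert.1 hw with rfl | hw
    · exact Or.inr rfl
    · exact Or.inl ⟨hsub w hw, by rintro rfl; exact hxs hw⟩

lemma card_lowNeighbourGraphs_mul_le (hvu : v ≠ u) (huK : K < D.d u) (hus : u ∉ s) :
    (lowNeighbourGraphs D K v s).card * ((D.d v - s.card) * (D.d u - 2 - K)) ≤
      (lowNeighbourGraphs D K v (insert u s)).card * ∑ i, D.d i := by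
  refine card_mul_le_card_mul (IsSwitchAt v u) (fun G hG => ?_) (fun G' hG' => ?_)
  · have hs {p} (hp : p ∈ switchPairs G v u s) :=
      isSwitchable_of_mem_switchPairs hG hvu huK hus hp
    refine (card_switchPairs_ge hG).trans (card_le_card_of_injOn (fun p => switch G v u p.1 p.2)
      (fun p hp => ?_) fun p hp q hq heq => ?_)
    · exact (mem_bipartiteAbove _).2
        ⟨switch_mem_lowNeighbourGraphs hG (hs hp) (mem_switchPairs.1 hp).1.2, _, _, hs hp, rfl⟩
    · obtain ⟨hx, hy⟩ := (hs hp).switch_inj (hs hq) heq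
      exact Sigma.ext hx (heq_of_eq hy)
  · have hsum : ∑ a, deg G' a = ∑ i, D.d i :=
      sum_congr rfl fun i _ => mem_graphs.1 (mem_filter.1 hG').1 i
    exact hsum ▸ card_filter_isSwitchAt_le _ v u G'

end Step

lemma card_lowNeighbourGraphs_mul_pow_le {K T : ℕ} {v : Fin D.n} (s : Finset (Fin D.n))
    (hs : ∀ u ∈ s, T ≤ D.d u) (hvK : D.d v ≤ K) (hKT : K < T) :
    (lowNeighbourGraphs D K v ∅).card * ((D.d v - (s.card - 1)) * (T - 2 - K)) ^ s.card ≤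
      (graphs D).card * (∑ i, D.d i) ^ s.card := by
  set F := (D.d v - (s.card - 1)) * (T - 2 - K)
  set M := ∑ i, D.d i
  suffices ∀ t ⊆ s, (lowNeighbourGraphs D K v ∅).card * F ^ t.card ≤
      (lowNeighbourGraphs D K v t).card * M ^ t.card from
    (this s subset_rfl).trans (Nat.mul_le_mul_right _ (card_le_card (filter_subset _ _)))
  intro t hts
  induction t using Finset.induction_on with
  | empty => simp
  | insert u t hut ih =>
    have hts' := (insert_subset_iff.1 hts)
    have hcard : t.card + 1 ≤ s.card := card_insert_of_notMem hut ▸ card_le_card hts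
    have huT := hs u hts'.1
    have hF : F ≤ (D.d v - t.card) * (D.d u - 2 - K) := Nat.mul_le_mul (by omega) (by omega)
    have hvu : v ≠ u := by rintro rfl; omega
    have hstep := card_lowNeighbourGraphs_mul_le (K := K) hvu (by omega) hut
    rw [card_insert_of_notMem hut, pow_succ, pow_succ]
    calc _ = (lowNeighbourGraphs D K v ∅).card * F ^ t.card * F := by ring
      _ ≤ (lowNeighbourGraphs D K v t).card * M ^ t.card * F := Nat.mul_le_mul_right _ (ih hts'.2)
      _ = (lowNeighbourGraphs D K v t).card * F * M ^ t.card := by ring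
      _ ≤ (lowNeighbourGraphs D K v t).card * ((D.d v - t.card) * (D.d u - 2 - K)) * M ^ t.card :=
          Nat.mul_le_mul_right _ (Nat.mul_le_mul_left _ hF)
      _ ≤ (lowNeighbourGraphs D K v (insert u t)).card * M * M ^ t.card :=
          Nat.mul_le_mul_right _ hstep
      _ = _ := by ring

lemma card_filter_sub_le_val {n : ℕ} {k : ℕ} (hk : k ≤ n) :
    (univ.filter fun j : Fin n => n - k ≤ (j : ℕ)).card = k := by
  have h1 := Fin.card_filter_val_lt (n := n) (m := n - k)
  have h2 := card_filter_add_card_filter_not (s := univ) (fun j : Fin n => (j : ℕ) < n - k)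
  simp only [not_lt, card_univ, Fintype.card_fin] at h2
  omega

lemma card_lowNeighbourGraphs_le {K T : ℕ} {v : Fin D.n} (h4 : 4 ≤ D.n)
    (hT : ∀ j : Fin D.n, D.n - 4 ≤ (j : ℕ) → T ≤ D.d j) (hvK : D.d v ≤ K) (hv : 6 ≤ D.d v)
    (hKT : 2 * K + 4 ≤ T) :
    ((lowNeighbourGraphs D K v ∅).card : ℝ) ≤
      (graphs D).card * (4 * (∑ i, D.d i : ℕ) / (D.d v * T)) ^ 4 := by
  have hnat := card_lowNeighbourGraphs_mul_pow_le (univ.filter fun j : Fin D.n => D.n - 4 ≤ (j : ℕ))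
    (fun j hj => hT j (mem_filter.1 hj).2) hvK (by omega)
  rw [card_filter_sub_le_val h4] at hnat
  set F := (D.d v - (4 - 1)) * (T - 2 - K)
  have hFnat : D.d v * T ≤ 4 * F := by
    calc D.d v * T ≤ (2 * (D.d v - (4 - 1))) * (2 * (T - 2 - K)) := by gcongr <;> omega
      _ = 4 * F := by ring
  have hF : (D.d v * T : ℝ) / 4 ≤ F := by
    rw [div_le_iff₀ (by norm_num)]; exact_mod_cast (mul_comm (F : ℕ) 4 ▸ hFnat)
  have hdT : (0 : ℝ) < D.d v * T := by exact_mod_cast Nat.mul_pos (by omega) (by omega)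
  have hFpos : (0 : ℝ) < F := (div_pos hdT (by norm_num)).trans_le hF
  have hreal : ((lowNeighbourGraphs D K v ∅).card : ℝ) * (F : ℝ) ^ 4 ≤
      (graphs D).card * ((∑ i, D.d i : ℕ) : ℝ) ^ 4 := by exact_mod_cast hnat
  calc ((lowNeighbourGraphs D K v ∅).card : ℝ)
      ≤ (graphs D).card * (((∑ i, D.d i : ℕ) : ℝ) / F) ^ 4 := by
        rw [div_pow, ← mul_div_assoc, le_div_iff₀ (by positivity)]; exact hreal
    _ ≤ (graphs D).card * (4 * (∑ i, D.d i : ℕ) / (D.d v * T)) ^ 4 := by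
        gcongr (graphs D).card * ?_ ^ 4
        calc ((∑ i, D.d i : ℕ) : ℝ) / F ≤ (∑ i, D.d i : ℕ) / (D.d v * T / 4) :=
              div_le_div_of_nonneg_left (by positivity) (by positivity) hF
          _ = 4 * (∑ i, D.d i : ℕ) / (D.d v * T) := by field_simp

def MediumVerticesAdjHigh (D : DegSeq) (lam : ℝ) (G : SimpleGraph (Fin D.n)) : Prop :=
  ∀ v : Fin D.n, (D.n : ℝ) ^ ((1 : ℝ) / 3) / Real.log (mD D) ≤ (deg G v : ℝ) →
    (deg G v : ℝ) < lam * Real.sqrt (mD D : ℝ) →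
    ∃ w : Fin D.n, G.Adj v w ∧ lam * Real.sqrt (mD D : ℝ) ≤ (deg G w : ℝ)

lemma filter_not_mediumVerticesAdjHigh_subset (lam : ℝ) :
    (graphs D).filter (fun G => ¬ MediumVerticesAdjHigh D lam G) ⊆
      (univ.filter fun v => (D.n : ℝ) ^ ((1 : ℝ) / 3) / Real.log (mD D) ≤ D.d v ∧
        D.d v ≤ ⌊lam * Real.sqrt (mD D)⌋₊).biUnion
        fun v => lowNeighbourGraphs D ⌊lam * Real.sqrt (mD D)⌋₊ v ∅ := by
  intro G hG
  obtain ⟨hGD, hbad⟩ := mem_filter.1 hG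
  have hdeg := mem_graphs.1 hGD
  simp only [MediumVerticesAdjHigh, hdeg, not_forall, not_exists, not_and, not_le] at hbad
  obtain ⟨v, hvX, hvK, hnbr⟩ := hbad
  refine mem_biUnion.2 ⟨v, mem_filter.2 ⟨mem_univ _, hvX, Nat.le_floor hvK.le⟩,
    mem_filter.2 ⟨hGD, fun w hw => Or.inr (Nat.le_floor (hnbr w hw).le), by simp⟩⟩

lemma card_lowNeighbourGraphs_le_of_medium {lam Dc X : ℝ} {v : Fin D.n} (hlam : 0 ≤ lam)
    (hDc : 0 < Dc) (h4 : 4 ≤ D.n) (hm : 2 ≤ mD D)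
    (htop : (mD D : ℝ) / (Dc * Real.log (mD D)) ≤ D.d ⟨D.n - 4, by omega⟩)
    (hgap : 2 * lam * Real.sqrt (mD D) + 4 ≤ (mD D : ℝ) / (Dc * Real.log (mD D)))
    (hX : 6 * Real.log (mD D) ≤ X) (hvX : X / Real.log (mD D) ≤ D.d v)
    (hvK : D.d v ≤ ⌊lam * Real.sqrt (mD D)⌋₊) :
    ((lowNeighbourGraphs D ⌊lam * Real.sqrt (mD D)⌋₊ v ∅).card : ℝ) ≤
      (graphs D).card * (12 * Dc * Real.log (mD D) ^ 2 / X) ^ 4 := by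
  set m := mD D
  set a := Real.log m
  set K := ⌊lam * Real.sqrt m⌋₊
  set T := D.d ⟨D.n - 4, by omega⟩
  have ha : 0 < a := Real.log_pos (by exact_mod_cast hm)
  have hXpos : 0 < X := by linarith
  have hv : 6 ≤ D.d v := by
    have : (6 : ℝ) ≤ D.d v := ((le_div_iff₀ ha).2 (by linarith)).trans hvX
    exact_mod_cast this
  have hKT : 2 * K + 4 ≤ T := by
    have hK : (K : ℝ) ≤ lam * Real.sqrt m := Nat.floor_le (by positivity)
    have : (2 * K + 4 : ℝ) ≤ T := by linarith
    exact_mod_cast this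
  have hT : ∀ j : Fin D.n, D.n - 4 ≤ (j : ℕ) → T ≤ D.d j := fun j hj => D.mono hj
  have hM : ((∑ i, D.d i : ℕ) : ℝ) ≤ 3 * m := by
    have := sum_d_le_two_mul_mD_add_one D
    exact_mod_cast (show ∑ i, D.d i ≤ 3 * m by omega)
  have hratio : 4 * ((∑ i, D.d i : ℕ) : ℝ) / (D.d v * T) ≤ 12 * Dc * a ^ 2 / X :=
    calc 4 * ((∑ i, D.d i : ℕ) : ℝ) / (D.d v * T) ≤ 4 * (3 * m) / (X / a * (m / (Dc * a))) :=
          div_le_div₀ (by positivity) (by linarith) (by positivity)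
            (mul_le_mul hvX htop (by positivity) (by positivity))
      _ = 12 * Dc * a ^ 2 / X := by field_simp; ring
  calc _ ≤ (graphs D).card * (4 * ((∑ i, D.d i : ℕ) : ℝ) / (D.d v * T)) ^ 4 :=
        card_lowNeighbourGraphs_le h4 hT hvK hv hKT
    _ ≤ _ := by gcongr (graphs D).card * ?_ ^ 4

lemma prob_not_mediumVerticesAdjHigh_le (hD : Feasible D) {lam Dc : ℝ} (hlam : 0 ≤ lam)
    (hDc : 0 < Dc) (h4 : 4 ≤ D.n) (hm : 2 ≤ mD D)
    (htop : (mD D : ℝ) / (Dc * Real.log (mD D)) ≤ D.d ⟨D.n - 4, by omega⟩)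
    (hgap : 2 * lam * Real.sqrt (mD D) + 4 ≤ (mD D : ℝ) / (Dc * Real.log (mD D)))
    (hlog : 12 * Real.log D.n ≤ (D.n : ℝ) ^ ((1 : ℝ) / 3)) :
    prob D (fun G => ¬ MediumVerticesAdjHigh D lam G) ≤
      (48 * Dc) ^ 4 * (Real.log D.n ^ 8 / (D.n : ℝ) ^ ((1 : ℝ) / 3)) := by
  set X := (D.n : ℝ) ^ ((1 : ℝ) / 3)
  set a := Real.log (mD D)
  set K := ⌊lam * Real.sqrt (mD D)⌋₊
  set medium := univ.filter fun v => X / a ≤ D.d v ∧ D.d v ≤ K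
  have ha : 0 < a := Real.log_pos (by exact_mod_cast hm)
  have ha2 : a ≤ 2 * Real.log D.n := log_mD_le hD
  have hX : 6 * a ≤ X := by linarith
  have hG : (0 : ℝ) < (graphs D).card := by exact_mod_cast card_pos.2 hD
  have hX3 : X ^ 3 = D.n := by
    rw [← Real.rpow_natCast, ← Real.rpow_mul (Nat.cast_nonneg _)]; norm_num
  have hbad : (((graphs D).filter fun G => ¬ MediumVerticesAdjHigh D lam G).card : ℝ) ≤
      ∑ v ∈ medium, ((lowNeighbourGraphs D K v ∅).card : ℝ) := by
    exact_mod_cast (card_le_card (filter_not_mediumVerticesAdjHigh_subset lam)).trans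
      card_biUnion_le
  calc prob D _ ≤ ∑ v ∈ medium, ((lowNeighbourGraphs D K v ∅).card : ℝ) / (graphs D).card := by
        rw [prob, ← sum_div, filter_congr_decidable]
        exact div_le_div_of_nonneg_right hbad hG.le
    _ ≤ ∑ _v : Fin D.n, (12 * Dc * a ^ 2 / X) ^ 4 := by
        refine (sum_le_sum fun v hv => ?_).trans
          (sum_le_sum_of_subset_of_nonneg (filter_subset _ _) fun _ _ _ => by positivity)
        rw [div_le_iff₀ hG, mul_comm]
        exact card_lowNeighbourGraphs_le_of_medium hlam hDc h4 hm htop hgap hX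
          (mem_filter.1 hv).2.1 (mem_filter.1 hv).2.2
    _ = (12 * Dc) ^ 4 * a ^ 8 / X := by
        rw [sum_const, card_univ, Fintype.card_fin, nsmul_eq_mul, ← hX3]; field_simp
    _ ≤ (12 * Dc) ^ 4 * (2 * Real.log D.n) ^ 8 / X := by gcongr
    _ = _ := by ring

lemma tendsto_mD_atTop {Ds : ℕ → DegSeq} (hpos : ∀ ℓ i, 0 < (Ds ℓ).d i)
    (hn : Tendsto (fun ℓ => (Ds ℓ).n) atTop atTop) : Tendsto (fun ℓ => mD (Ds ℓ)) atTop atTop :=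
  tendsto_atTop.2 fun b => (hn.eventually_ge_atTop (2 * b + 1)).mono fun ℓ hℓ => by
    have := n_le_two_mul_mD_add_one (hpos ℓ); omega

lemma eventually_mul_log_le_rpow (c : ℝ) {r : ℝ} (hr : 0 < r) :
    ∀ᶠ x : ℝ in atTop, c * Real.log x ≤ x ^ r := by
  have hc : 0 < |c| + 1 := by positivity
  filter_upwards [(isLittleO_log_rpow_atTop hr).bound (inv_pos.2 hc), eventually_ge_atTop 0]
    with x hx hx0
  rw [Real.norm_eq_abs, Real.norm_of_nonneg (Real.rpow_nonneg hx0 r)] at hx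
  calc c * Real.log x ≤ |c| * |Real.log x| := (le_abs_self _).trans (abs_mul _ _).le
    _ ≤ (|c| + 1) * ((|c| + 1)⁻¹ * x ^ r) := by gcongr; linarith
    _ = x ^ r := by field_simp

lemma eventually_mul_sqrt_add_le_div_log (A B : ℝ) {C : ℝ} (hC : 0 < C) :
    ∀ᶠ x : ℝ in atTop, A * Real.sqrt x + B ≤ x / (C * Real.log x) := by
  filter_upwards [eventually_mul_log_le_rpow ((|A| + |B|) * C) (by norm_num : (0 : ℝ) < 1 / 2),
    eventually_ge_atTop 2] with x hlog hx
  have hsx : 1 ≤ Real.sqrt x := Real.one_le_sqrt.2 (by linarith)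
  rw [le_div_iff₀ (mul_pos hC (Real.log_pos (by linarith))), ← Real.sqrt_eq_rpow] at *
  calc (A * Real.sqrt x + B) * (C * Real.log x)
      ≤ ((|A| + |B|) * Real.sqrt x) * (C * Real.log x) := by
        gcongr
        · exact mul_nonneg hC.le (Real.log_nonneg (by linarith))
        · nlinarith [le_abs_self A, le_abs_self B, abs_nonneg B]
    _ = Real.sqrt x * ((|A| + |B|) * C * Real.log x) := by ring
    _ ≤ Real.sqrt x * Real.sqrt x := by gcongr
    _ = x := Real.mul_self_sqrt (by linarith)

lemma tendsto_log_pow_div_rpow (k : ℕ) {r : ℝ} (hr : 0 < r) :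
    Tendsto (fun x : ℝ => Real.log x ^ k / x ^ r) atTop (nhds 0) :=
  (isLittleO_log_rpow_rpow_atTop k hr).tendsto_div_nhds_zero.congr fun x => by
    rw [Real.rpow_natCast]

/-- Proposition 4.2: medium-degree vertices are adjacent to
high-degree vertices. -/
theorem medium_degree_adjacent_to_high
    (ρ μ : ℝ)
    (Dc : ℝ) (hDc : 0 < Dc) :
    ∃ lam₀ : ℝ, 0 < lam₀ ∧
      ∀ lam : ℝ, 0 < lam → lam ≤ lam₀ →
        ∀ Ds : ℕ → DegSeq,
          Filter.Tendsto (fun ℓ => (Ds ℓ).n) Filter.atTop Filter.atTop →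
          (∀ ℓ, Feasible (Ds ℓ)) →
          (∀ ℓ i, 0 < (Ds ℓ).d i) →
          (∀ ℓ, HasCenter μ (Ds ℓ)) →
          (∀ ℓ, ρ * μ ^ 10 * (mD (Ds ℓ) : ℝ) <
            ∑ i ∈ Finset.univ.filter
              (fun i : Fin (Ds ℓ).n =>
                lam * Real.sqrt (mD (Ds ℓ) : ℝ) ≤ ((Ds ℓ).d i : ℝ)),
              ((Ds ℓ).d i : ℝ)) →
          (∀ ℓ, ∃ h4 : 4 ≤ (Ds ℓ).n,
            (mD (Ds ℓ) : ℝ) / (Dc * Real.log (mD (Ds ℓ))) ≤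
              ((Ds ℓ).d ⟨(Ds ℓ).n - 4, by omega⟩ : ℝ)) →
          WHP Ds (fun ℓ G =>
            ∀ v : Fin (Ds ℓ).n,
              ((Ds ℓ).n : ℝ) ^ ((1 : ℝ) / 3) / Real.log (mD (Ds ℓ)) ≤ (deg G v : ℝ) →
              (deg G v : ℝ) < lam * Real.sqrt (mD (Ds ℓ) : ℝ) →
              ∃ w : Fin (Ds ℓ).n, G.Adj v w ∧
                lam * Real.sqrt (mD (Ds ℓ) : ℝ) ≤ (deg G w : ℝ)) := by
  refine ⟨1, one_pos, fun lam hlam _ Ds hn hfeas hpos _ _ htop => ?_⟩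
  have hm := tendsto_mD_atTop hpos hn
  have hnR := (tendsto_natCast_atTop_atTop (R := ℝ)).comp hn
  have hmR := (tendsto_natCast_atTop_atTop (R := ℝ)).comp hm
  have hbound := ((tendsto_log_pow_div_rpow 8 (by norm_num : (0 : ℝ) < 1 / 3)).comp
    hnR).const_mul ((48 * Dc) ^ 4)
  rw [mul_zero] at hbound
  refine whp_of_tendsto_prob_not (P := fun ℓ => MediumVerticesAdjHigh (Ds ℓ) lam) hfeas
    (squeeze_zero' (Eventually.of_forall fun ℓ => by unfold prob; positivity) ?_ hbound)
  filter_upwards [hm.eventually_ge_atTop 2,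
    hnR.eventually (eventually_mul_log_le_rpow 12 (by norm_num : (0 : ℝ) < 1 / 3)),
    hmR.eventually (eventually_mul_sqrt_add_le_div_log (2 * lam) 4 hDc)] with ℓ hm2 hlog hgap
  obtain ⟨h4, hT⟩ := htop ℓ
  exact prob_not_mediumVerticesAdjHigh_le (hfeas ℓ) hlam.le hDc h4 hm2 hT hgap hlog

end RandomGraphPaper
end
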